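/- Let U, V be manifolds, φ : U → V a smooth map, F a C^∞(V)-submodule of 𝔛_c(V), and 𝒢 a generating set for F. Assume that every Y ∈ F admits a smooth vector field Z on U that is φ-related to Y. Then the pullback module φ^{-1}(F) equals the set of finite C_c^∞(U)-linear combinations of smooth vector fields Z on U each of which is either φ-related to some element of 𝒢 or φ-related to the zero vector field on V. -/

import Mathlib

open Manifold Topology Function Set

noncomputable section

/-- Rough vector fields on a manifold `M`: sections of the tangent bundle. -/
abbrev VectorFieldOn {E H : Type*} [NormedAddCommGroup E] [NormedSpace ℝ E]
    [TopologicalSpace H] (I : ModelWithCorners ℝ E H)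
    (M : Type*) [TopologicalSpace M] [ChartedSpace H M] : Type _ :=
  ∀ x : M, TangentSpace I x

section Defs

variable {E H : Type*} [NormedAddCommGroup E] [NormedSpace ℝ E] [TopologicalSpace H]
  (I : ModelWithCorners ℝ E H)
  {M : Type*} [TopologicalSpace M] [ChartedSpace H M] [IsManifold I (⊤ : ℕ∞) M]

/-- A vector field is smooth iff it is a smooth section of the tangent bundle. -/
def IsSmoothVF (X : VectorFieldOn I M) : Prop :=
  ContMDiff I I.tangent (⊤ : ℕ∞) (fun x => (⟨x, X x⟩ : TangentBundle I M))

/-- A vector field is smooth on a subset `O` iff the corresponding section of the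
tangent bundle is smooth on `O`. -/
def IsSmoothVFOn (X : VectorFieldOn I M) (O : Set M) : Prop :=
  ContMDiffOn I I.tangent (⊤ : ℕ∞) (fun x => (⟨x, X x⟩ : TangentBundle I M)) O

/-- The support of a vector field: the closure of the set where it is nonzero. -/
def suppVF (X : VectorFieldOn I M) : Set M := closure {x : M | X x ≠ 0}

/-- A vector field is compactly supported iff its support is compact. -/
def IsCptSuppVF (X : VectorFieldOn I M) : Prop := IsCompact (suppVF I X)

/-- A real valued function on a manifold is smooth. -/
def IsSmoothFn (f : M → ℝ) : Prop := ContMDiff I 𝓘(ℝ) (⊤ : ℕ∞) f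

/-- `f ∈ C_c^∞(M)`: `f` is smooth and compactly supported. -/
def IsCcFn (f : M → ℝ) : Prop := IsSmoothFn I f ∧ HasCompactSupport f

/-- `𝔛_c(M)`: the set of compactly supported smooth vector fields on `M`. -/
def XC : Set (VectorFieldOn I M) := {X | IsSmoothVF I X ∧ IsCptSuppVF I X}

/-- `F` is a `C^∞(M)`-submodule of `𝔛_c(M)`: a set of compactly supported smooth
vector fields closed under addition and under multiplication by smooth functions. -/
structure IsCinftySubmodule (F : Set (VectorFieldOn I M)) : Prop where
  subset_XC : F ⊆ XC I
  add_mem : ∀ X ∈ F, ∀ Y ∈ F, (fun x => X x + Y x) ∈ F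
  smul_mem : ∀ f : M → ℝ, IsSmoothFn I f → ∀ X ∈ F, (fun x => f x • X x) ∈ F

/-- `X` is a finite `C_c^∞(M)`-linear combination of elements of `S`. -/
def IsCcSpan (S : Set (VectorFieldOn I M)) (X : VectorFieldOn I M) : Prop :=
  ∃ (k : ℕ) (g : Fin k → M → ℝ) (Y : Fin k → VectorFieldOn I M),
    (∀ i, IsCcFn I (g i)) ∧ (∀ i, Y i ∈ S) ∧ ∀ x, X x = ∑ i, g i x • Y i x

/-- `𝒢` is a generating set for the module `F`: the elements of `𝒢` are smooth vector
fields, `g • Y ∈ F` for every `g ∈ C_c^∞(M)` and `Y ∈ 𝒢`, and every element of `F` is a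
finite `C_c^∞(M)`-linear combination of elements of `𝒢`. -/
structure IsGeneratingSet (F 𝒢 : Set (VectorFieldOn I M)) : Prop where
  smooth : ∀ Y ∈ 𝒢, IsSmoothVF I Y
  smul_mem : ∀ g : M → ℝ, IsCcFn I g → ∀ Y ∈ 𝒢, (fun x => g x • Y x) ∈ F
  spans : ∀ X ∈ F, IsCcSpan I 𝒢 X

/-- The sum of two sets of vector fields. -/
def setAddVF (S T : Set (VectorFieldOn I M)) : Set (VectorFieldOn I M) :=
  {X | ∃ A ∈ S, ∃ B ∈ T, ∀ x, X x = A x + B x}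

/-- The module `F` is locally finitely generated: each point has an open neighbourhood
`O` carrying finitely many vector fields, smooth on `O`, such that every element of `F`
supported in `O` coincides on `O` with a `C_c^∞(O)`-linear combination of them. -/
def LocallyFinGen (F : Set (VectorFieldOn I M)) : Prop :=
  ∀ x : M, ∃ O : Set M, IsOpen O ∧ x ∈ O ∧
    ∃ (k : ℕ) (Y : Fin k → VectorFieldOn I M),
      (∀ i, IsSmoothVFOn I (Y i) O) ∧
      ∀ X ∈ F, suppVF I X ⊆ O →
        ∃ g : Fin k → M → ℝ, (∀ i, IsCcFn I (g i) ∧ tsupport (g i) ⊆ O) ∧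
          ∀ x' ∈ O, X x' = ∑ i, g i x' • Y i x'

variable {E' H' : Type*} [NormedAddCommGroup E'] [NormedSpace ℝ E'] [TopologicalSpace H']
  (I' : ModelWithCorners ℝ E' H')
  {N : Type*} [TopologicalSpace N] [ChartedSpace H' N] [IsManifold I' (⊤ : ℕ∞) N]

/-- `Z` is `φ`-related to `Y` : `dφ_u (Z u) = Y (φ u)` for all `u`. -/
def IsPhiRelated (φ : M → N) (Z : VectorFieldOn I M) (Y : VectorFieldOn I' N) : Prop :=
  ∀ u, mfderiv I I' φ u (Z u) = Y (φ u)

/-- `φ` is a submersion: its differential is surjective at every point. -/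
def IsSubmersion (φ : M → N) : Prop := ∀ u, Surjective (mfderiv I I' φ u)

/-- `Γ_c(ker dφ)`: the compactly supported smooth vector fields killed by `dφ`. -/
def KerGammaC (φ : M → N) : Set (VectorFieldOn I M) :=
  {X | X ∈ XC I ∧ ∀ u, mfderiv I I' φ u (X u) = 0}

/-- The pullback module `φ⁻¹(F)` of a module of vector fields under a smooth map. -/
def PullbackModule (φ : M → N) (F : Set (VectorFieldOn I' N)) :
    Set (VectorFieldOn I M) :=
  {X | X ∈ XC I ∧ ∃ (k : ℕ) (f : Fin k → M → ℝ) (Y : Fin k → VectorFieldOn I' N),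
    (∀ i, IsCcFn I (f i)) ∧ (∀ i, Y i ∈ F) ∧
    ∀ u, mfderiv I I' φ u (X u) = ∑ i, f i u • Y i (φ u)}

end Defs

section Lie

variable {n : ℕ} {M : Type*} [TopologicalSpace M]
  [ChartedSpace (EuclideanSpace ℝ (Fin n)) M] [IsManifold (𝓡 n) (⊤ : ℕ∞) M]

/-- The expression of a vector field in the chart around `x₀` (the pullback of `X`
under the inverse of the extended chart at `x₀`). -/
def chartPushVF (x₀ : M) (X : VectorFieldOn (𝓡 n) M)
    (v : EuclideanSpace ℝ (Fin n)) : EuclideanSpace ℝ (Fin n) :=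
  (mfderiv (𝓡 n) (𝓡 n) ((extChartAt (𝓡 n) x₀).symm) v).inverse
    (X ((extChartAt (𝓡 n) x₀).symm v))

/-- The Lie bracket of two vector fields on a manifold, computed in the chart around
the given point (as for `VectorField.mlieBracket` in Mathlib). -/
def mlie (X Y : VectorFieldOn (𝓡 n) M) : VectorFieldOn (𝓡 n) M := fun x₀ =>
  (mfderiv (𝓡 n) (𝓡 n) (extChartAt (𝓡 n) x₀) x₀).inverse
    (show TangentSpace (𝓡 n) (extChartAt (𝓡 n) x₀ x₀) from
      (VectorField.lieBracket ℝ (chartPushVF x₀ X) (chartPushVF x₀ Y)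
        (extChartAt (𝓡 n) x₀ x₀) : EuclideanSpace ℝ (Fin n)))

/-- A singular foliation on a manifold: an involutive, locally finitely generated
`C^∞(M)`-submodule of `𝔛_c(M)`. -/
structure IsSingularFoliation (F : Set (VectorFieldOn (𝓡 n) M)) : Prop where
  submodule : IsCinftySubmodule (𝓡 n) F
  involutive : ∀ X ∈ F, ∀ Y ∈ F, mlie X Y ∈ F
  locFinGen : LocallyFinGen (𝓡 n) F

end Lie

section MoreDefs

variable {E H : Type*} [NormedAddCommGroup E] [NormedSpace ℝ E] [TopologicalSpace H]
  (I : ModelWithCorners ℝ E H)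
  {M : Type*} [TopologicalSpace M] [ChartedSpace H M] [IsManifold I (⊤ : ℕ∞) M]
  {E' H' : Type*} [NormedAddCommGroup E'] [NormedSpace ℝ E'] [TopologicalSpace H']
  (I' : ModelWithCorners ℝ E' H')
  {N : Type*} [TopologicalSpace N] [ChartedSpace H' N] [IsManifold I' (⊤ : ℕ∞) N]

/-- The global hull of a module of compactly supported vector fields: the smooth vector
fields `X` such that `g • X` belongs to the module for every `g ∈ C_c^∞(M)`. -/
def GlobalHull (F : Set (VectorFieldOn I M)) : Set (VectorFieldOn I M) :=
  {X | IsSmoothVF I X ∧ ∀ g : M → ℝ, IsCcFn I g → (fun x => g x • X x) ∈ F}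

/-- `X` is `f`-projectable, with (necessarily unique, when `f` is surjective)
projection the smooth vector field `Y`. -/
def ProjectableTo (f : M → N) (X : VectorFieldOn I M) (Y : VectorFieldOn I' N) : Prop :=
  IsSmoothVF I' Y ∧ IsPhiRelated I I' f X Y

/-- The pushforward `f_*(F)`: all finite `C_c^∞(N)`-linear combinations of projections
`f_* X` of `f`-projectable elements `X` of the global hull of `F`. -/
def PushforwardModule (f : M → N) (F : Set (VectorFieldOn I M)) :
    Set (VectorFieldOn I' N) :=
  {W | IsCcSpan I' {Y | ∃ X ∈ GlobalHull I F, ProjectableTo I I' f X Y} W}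

end MoreDefs

section PairDefs

variable {n : ℕ} {M : Type*} [TopologicalSpace M]
  [ChartedSpace (EuclideanSpace ℝ (Fin n)) M] [IsManifold (𝓡 n) (⊤ : ℕ∞) M]

/-- The right-invariant extension `→X` of a vector field `X` on `M` to the pair
groupoid `M × M`, namely `(x, y) ↦ (X x, 0)`. -/
def rightInvVF (X : VectorFieldOn (𝓡 n) M) :
    VectorFieldOn ((𝓡 n).prod (𝓡 n)) (M × M) :=
  fun p => (show TangentSpace ((𝓡 n).prod (𝓡 n)) p from ((X p.1, 0) :
    EuclideanSpace ℝ (Fin n) × EuclideanSpace ℝ (Fin n)))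

/-- The left-invariant extension `←X` of a vector field `X` on `M` to the pair
groupoid `M × M`, namely `(x, y) ↦ (0, X y)`. -/
def leftInvVF (X : VectorFieldOn (𝓡 n) M) :
    VectorFieldOn ((𝓡 n).prod (𝓡 n)) (M × M) :=
  fun p => (show TangentSpace ((𝓡 n).prod (𝓡 n)) p from ((0, X p.2) :
    EuclideanSpace ℝ (Fin n) × EuclideanSpace ℝ (Fin n)))

/-- `→F`: the `C_c^∞(M × M)`-span of the vector fields `→X`, `X ∈ F`. -/
def rightInvModule (F : Set (VectorFieldOn (𝓡 n) M)) :
    Set (VectorFieldOn ((𝓡 n).prod (𝓡 n)) (M × M)) :=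
  {W | IsCcSpan ((𝓡 n).prod (𝓡 n)) {W' | ∃ X ∈ F, W' = rightInvVF X} W}

/-- `←F`: the `C_c^∞(M × M)`-span of the vector fields `←X`, `X ∈ F`. -/
def leftInvModule (F : Set (VectorFieldOn (𝓡 n) M)) :
    Set (VectorFieldOn ((𝓡 n).prod (𝓡 n)) (M × M)) :=
  {W | IsCcSpan ((𝓡 n).prod (𝓡 n)) {W' | ∃ X ∈ F, W' = leftInvVF X} W}

end PairDefs

/-- `(U, tU, sU)` is a bisubmersion for `F` in the sense of Androulidakis–Skandalis:
`tU` and `sU` are smooth submersions to `M` and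
`tU⁻¹(F) = Γ_c(ker dtU) + Γ_c(ker dsU) = sU⁻¹(F)`. -/
structure IsASBisubmersion {n k : ℕ} {M U : Type*}
    [TopologicalSpace M] [ChartedSpace (EuclideanSpace ℝ (Fin n)) M]
    [IsManifold (𝓡 n) (⊤ : ℕ∞) M]
    [TopologicalSpace U] [ChartedSpace (EuclideanSpace ℝ (Fin k)) U]
    [IsManifold (𝓡 k) (⊤ : ℕ∞) U]
    (F : Set (VectorFieldOn (𝓡 n) M)) (tU sU : U → M) : Prop where
  smooth_t : ContMDiff (𝓡 k) (𝓡 n) (⊤ : ℕ∞) tU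
  smooth_s : ContMDiff (𝓡 k) (𝓡 n) (⊤ : ℕ∞) sU
  subm_t : IsSubmersion (𝓡 k) (𝓡 n) tU
  subm_s : IsSubmersion (𝓡 k) (𝓡 n) sU
  pullback_t : PullbackModule (𝓡 k) (𝓡 n) tU F
    = setAddVF (𝓡 k) (KerGammaC (𝓡 k) (𝓡 n) tU) (KerGammaC (𝓡 k) (𝓡 n) sU)
  pullback_s : PullbackModule (𝓡 k) (𝓡 n) sU F
    = setAddVF (𝓡 k) (KerGammaC (𝓡 k) (𝓡 n) tU) (KerGammaC (𝓡 k) (𝓡 n) sU)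


/-!
Both sides are additive closures of elementary fields. A field `X ∈ 𝔛_c(U)` lies in `φ⁻¹(F)`
iff `dφ X` is a finite sum of fields `f • (Y ∘ φ)` along `φ` with `f ∈ C_c^∞(U)`, `Y ∈ F`,
and the right-hand side consists of the finite sums of fields `g • Z`. Applying `dφ` to `g • Z`
gives such a term, after replacing `Y ∈ 𝒢` by `h • Y ∈ F` with `h = 1` on `φ (supp g)`.
Conversely every `W ∈ 𝒢` has an exact lift, glued with a partition of unity from lifts of the
compactly supported multiples of `W`, which lie in `F`. Hence `dφ X = dφ L` for some `L` in the
span; then `X - L` is `φ`-related to `0`, and `X = L + χ • (X - L)` for a cutoff `χ`.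
-/

theorem AddSubmonoid.mem_closure_iff_exists_fin_sum {A : Type*} [AddCommMonoid A] {s : Set A}
    {x : A} : x ∈ closure s ↔ ∃ (k : ℕ) (v : Fin k → A), (∀ i, v i ∈ s) ∧ ∑ i, v i = x := by
  constructor
  · intro hx
    obtain ⟨l, hl, rfl⟩ := exists_list_of_mem_closure hx
    exact ⟨l.length, fun i => l[i], fun i => hl _ (List.getElem_mem _), by simp [← List.sum_ofFn]⟩
  · rintro ⟨k, v, hv, rfl⟩
    exact _root_.sum_mem fun i _ => subset_closure (hv i)

section CcCombinations

variable {E H : Type*} [NormedAddCommGroup E] [NormedSpace ℝ E] [TopologicalSpace H]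
  (I : ModelWithCorners ℝ E H)
  {M : Type*} [TopologicalSpace M] [ChartedSpace H M]
  {N : Type*} {W : N → Type*} [∀ y, AddCommMonoid (W y)] [∀ y, Module ℝ (W y)]

def ccSmulComp (ψ : M → N) (S : Set (∀ y, W y)) : Set (∀ x, W (ψ x)) :=
  {V | ∃ f, IsCcFn I f ∧ ∃ Y ∈ S, V = fun x => f x • Y (ψ x)}

theorem mem_closure_ccSmulComp_iff {ψ : M → N} {S : Set (∀ y, W y)} {V : ∀ x, W (ψ x)} :
    V ∈ AddSubmonoid.closure (ccSmulComp I ψ S) ↔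
      ∃ (k : ℕ) (f : Fin k → M → ℝ) (Y : Fin k → ∀ y, W y), (∀ i, IsCcFn I (f i)) ∧
        (∀ i, Y i ∈ S) ∧ ∀ x, V x = ∑ i, f i x • Y i (ψ x) := by
  rw [AddSubmonoid.mem_closure_iff_exists_fin_sum]
  constructor
  · rintro ⟨k, v, hv, rfl⟩
    choose f hf Y hY hv using hv
    exact ⟨k, f, Y, hf, hY, fun x => by simp only [Finset.sum_apply, hv]⟩
  · rintro ⟨k, f, Y, hf, hY, hV⟩
    exact ⟨k, fun i x => f i x • Y i (ψ x), fun i => ⟨f i, hf i, Y i, hY i, rfl⟩,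
      funext fun x => by simp [hV]⟩

def ccSmul (S : Set (VectorFieldOn I M)) : Set (VectorFieldOn I M) := ccSmulComp I id S

theorem isCcSpan_iff_mem_closure {S : Set (VectorFieldOn I M)} {X : VectorFieldOn I M} :
    IsCcSpan I S X ↔ X ∈ AddSubmonoid.closure (ccSmul I S) :=
  (mem_closure_ccSmulComp_iff I).symm

end CcCombinations

section CompactlySupported

variable {E H : Type*} [NormedAddCommGroup E] [NormedSpace ℝ E] [TopologicalSpace H]
  {I : ModelWithCorners ℝ E H}
  {M : Type*} [TopologicalSpace M] [ChartedSpace H M]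

theorem eq_zero_of_notMem_suppVF {X : VectorFieldOn I M} {x : M} (hx : x ∉ suppVF I X) :
    X x = 0 :=
  not_not.1 fun h => hx (subset_closure h)

theorem isCptSuppVF_of_subset {X : VectorFieldOn I M} {K : Set M} (hK : IsCompact K)
    (hKc : IsClosed K) (h : ∀ x, X x ≠ 0 → x ∈ K) : IsCptSuppVF I X :=
  hK.of_isClosed_subset isClosed_closure (closure_minimal h hKc)

theorem isCptSuppVF_of_forall_eq_zero {X Y Z : VectorFieldOn I M} (hX : IsCptSuppVF I X)
    (hY : IsCptSuppVF I Y) (h : ∀ x, X x = 0 → Y x = 0 → Z x = 0) : IsCptSuppVF I Z :=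
  isCptSuppVF_of_subset (hX.union hY) (isClosed_closure.union isClosed_closure) fun x hx =>
    by_contra fun hx' => hx (h x (eq_zero_of_notMem_suppVF fun h' => hx' (Or.inl h'))
      (eq_zero_of_notMem_suppVF fun h' => hx' (Or.inr h')))

variable [IsManifold I (⊤ : ℕ∞) M]

theorem zero_mem_XC : (0 : VectorFieldOn I M) ∈ XC I :=
  ⟨Bundle.contMDiff_zeroSection ℝ (TangentSpace I),
    isCptSuppVF_of_subset isCompact_empty isClosed_empty fun _ h => absurd rfl h⟩

theorem add_mem_XC {X Y : VectorFieldOn I M} (hX : X ∈ XC I) (hY : Y ∈ XC I) :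
    X + Y ∈ XC I :=
  ⟨hX.1.add_section hY.1, isCptSuppVF_of_forall_eq_zero hX.2 hY.2 fun x hXx hYx => by
    rw [Pi.add_apply, hXx, hYx, add_zero]⟩

theorem sub_mem_XC {X Y : VectorFieldOn I M} (hX : X ∈ XC I) (hY : Y ∈ XC I) :
    X - Y ∈ XC I :=
  ⟨hX.1.sub_section hY.1, isCptSuppVF_of_forall_eq_zero hX.2 hY.2 fun x hXx hYx => by
    rw [Pi.sub_apply, hXx, hYx, sub_zero]⟩

theorem smul_mem_XC {g : M → ℝ} (hg : IsCcFn I g) {Z : VectorFieldOn I M}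
    (hZ : IsSmoothVF I Z) : (fun x => g x • Z x) ∈ XC I :=
  ⟨hg.1.smul_section hZ, isCptSuppVF_of_subset hg.2 (isClosed_tsupport g)
    fun _ hx => subset_tsupport g (left_ne_zero_of_smul hx)⟩

theorem mem_XC_of_mem_closure {S : Set (VectorFieldOn I M)} (hS : ∀ Z ∈ S, IsSmoothVF I Z)
    {X : VectorFieldOn I M} (hX : X ∈ AddSubmonoid.closure (ccSmul I S)) : X ∈ XC I := by
  induction hX using AddSubmonoid.closure_induction with
  | mem _ hV =>
    obtain ⟨g, hg, Z, hZ, rfl⟩ := hV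
    exact smul_mem_XC hg (hS Z hZ)
  | zero => exact zero_mem_XC
  | add _ _ _ _ hX hY => exact add_mem_XC hX hY

end CompactlySupported

section Cutoff

variable {E H : Type*} [NormedAddCommGroup E] [NormedSpace ℝ E] [FiniteDimensional ℝ E]
  [TopologicalSpace H] (I : ModelWithCorners ℝ E H)
  {M : Type*} [TopologicalSpace M] [ChartedSpace H M] [IsManifold I (⊤ : ℕ∞) M]
  [T2Space M] [SigmaCompactSpace M]

theorem exists_isCcFn_eqOn_one {K : Set M} (hK : IsCompact K) :
    ∃ χ : M → ℝ, IsCcFn I χ ∧ EqOn χ 1 K := by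
  have : LocallyCompactSpace H := I.locallyCompactSpace
  have : LocallyCompactSpace M := ChartedSpace.locallyCompactSpace H M
  obtain ⟨K', hK', hKK'⟩ := exists_compact_superset hK
  obtain ⟨χ, hχ, -, hsupp, hone⟩ :=
    exists_contMDiff_support_eq_eq_one_iff I isOpen_interior hK.isClosed hKK'
  refine ⟨χ, ⟨hχ, hK'.of_isClosed_subset (isClosed_tsupport χ) ?_⟩, fun x hx => (hone x).1 hx⟩
  rw [tsupport, hsupp]
  exact closure_minimal interior_subset hK'.isClosed

variable {I} in
theorem exists_isCcFn_smul_eq {X : VectorFieldOn I M} (hX : IsCptSuppVF I X) :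
    ∃ χ : M → ℝ, IsCcFn I χ ∧ (fun x => χ x • X x) = X := by
  obtain ⟨χ, hχ, hχ1⟩ := exists_isCcFn_eqOn_one I hX
  refine ⟨χ, hχ, funext fun x => ?_⟩
  by_cases hx : x ∈ suppVF I X
  · rw [hχ1 hx, Pi.one_apply, one_smul]
  · rw [eq_zero_of_notMem_suppVF hx, smul_zero]

theorem exists_smoothPartitionOfUnity_hasCompactSupport :
    ∃ ρ : SmoothPartitionOfUnity ℕ I M univ, ∀ j, HasCompactSupport (ρ j) := by
  have : LocallyCompactSpace H := I.locallyCompactSpace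
  have : LocallyCompactSpace M := ChartedSpace.locallyCompactSpace H M
  let K := CompactExhaustion.choice M
  obtain ⟨ρ, hρ⟩ := SmoothPartitionOfUnity.exists_isSubordinate I isClosed_univ
    (fun j => interior (K (j + 1))) (fun _ => isOpen_interior)
    fun x _ => mem_iUnion.2 ⟨K.find x, K.subset_interior_succ _ (K.mem_find x)⟩
  exact ⟨ρ, fun j => (K.isCompact (j + 1)).of_isClosed_subset (isClosed_tsupport _)
    ((hρ j).trans interior_subset)⟩

end Cutoff

section Pullback

variable {E H : Type*} [NormedAddCommGroup E] [NormedSpace ℝ E] [TopologicalSpace H]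
  (I : ModelWithCorners ℝ E H)
  {M : Type*} [TopologicalSpace M] [ChartedSpace H M]
  {E' H' : Type*} [NormedAddCommGroup E'] [NormedSpace ℝ E'] [TopologicalSpace H']
  (I' : ModelWithCorners ℝ E' H')
  {N : Type*} [TopologicalSpace N] [ChartedSpace H' N]

def mfderivVF (φ : M → N) : VectorFieldOn I M →+ ((u : M) → TangentSpace I' (φ u)) where
  toFun X u := mfderiv I I' φ u (X u)
  map_zero' := funext fun u => map_zero (mfderiv I I' φ u)
  map_add' X Y := funext fun u => map_add (mfderiv I I' φ u) (X u) (Y u)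

theorem mfderivVF_apply (φ : M → N) (X : VectorFieldOn I M) (u : M) :
    mfderivVF I I' φ X u = mfderiv I I' φ u (X u) := rfl

variable [IsManifold I (⊤ : ℕ∞) M]

theorem mem_pullbackModule_iff {φ : M → N} {F : Set (VectorFieldOn I' N)}
    {X : VectorFieldOn I M} :
    X ∈ PullbackModule I I' φ F ↔
      X ∈ XC I ∧ mfderivVF I I' φ X ∈ AddSubmonoid.closure (ccSmulComp I φ F) := by
  rw [mem_closure_ccSmulComp_iff]
  rfl

variable {I I'} [IsManifold I' (⊤ : ℕ∞) N]

theorem exists_isPhiRelated_of_forall_isCcFn_smul [FiniteDimensional ℝ E'] [T2Space N]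
    [SigmaCompactSpace N] {φ : M → N} (hφ : ContMDiff I I' (⊤ : ℕ∞) φ)
    {W : VectorFieldOn I' N}
    (hW : ∀ g, IsCcFn I' g → ∃ Z, IsSmoothVF I Z ∧ IsPhiRelated I I' φ Z (fun y => g y • W y)) :
    ∃ Z, IsSmoothVF I Z ∧ IsPhiRelated I I' φ Z W := by
  obtain ⟨ρ, hρ⟩ := exists_smoothPartitionOfUnity_hasCompactSupport I' (M := N)
  choose g hg hg1 using fun j => exists_isCcFn_eqOn_one I' (hρ j)
  choose Z hZ hZW using fun j => hW (g j) (hg j)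
  have hρW : ∀ j y, ρ j y • (g j y • W y) = ρ j y • W y := by
    intro j y
    by_cases hy : ρ j y = 0
    · rw [hy, zero_smul, zero_smul]
    · rw [hg1 j (subset_tsupport _ hy), Pi.one_apply, one_smul]
  refine ⟨fun u => ∑ᶠ j, ρ j (φ u) • Z j u, ?_, fun u => ?_⟩
  · refine ContMDiff.finsum_section_of_locallyFinite
      ((ρ.locallyFinite.preimage_continuous hφ.continuous).subset fun j u hu => ?_)
      fun j => ((ρ j).contMDiff.comp hφ).smul_section (hZ j)
    exact left_ne_zero_of_smul hu
  · have hfin : HasFiniteSupport fun j => ρ j (φ u) • Z j u :=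
      (ρ.locallyFinite.point_finite (φ u)).subset fun j hj => left_ne_zero_of_smul hj
    calc mfderiv I I' φ u (∑ᶠ j, ρ j (φ u) • Z j u)
        = ∑ᶠ j, ρ j (φ u) • mfderiv I I' φ u (Z j u) := by
          rw [map_finsum _ hfin]
          simp only [map_smul]
      _ = ∑ᶠ j, ρ j (φ u) • W (φ u) := finsum_congr fun j => by rw [hZW j u, hρW]
      _ = W (φ u) := by rw [← finsum_smul, ρ.sum_eq_one (mem_univ _), one_smul]

end Pullback

section PullbackSpan

variable {E H : Type*} [NormedAddCommGroup E] [NormedSpace ℝ E] [TopologicalSpace H]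
  {I : ModelWithCorners ℝ E H}
  {M : Type*} [TopologicalSpace M] [ChartedSpace H M]
  {E' H' : Type*} [NormedAddCommGroup E'] [NormedSpace ℝ E'] [TopologicalSpace H']
  {I' : ModelWithCorners ℝ E' H'}
  {N : Type*} [TopologicalSpace N] [ChartedSpace H' N] [IsManifold I' (⊤ : ℕ∞) N]
  {φ : M → N} {F 𝒢 : Set (VectorFieldOn I' N)} {S : Set (VectorFieldOn I M)}

theorem mfderivVF_mem_closure_of_mem_closure [FiniteDimensional ℝ E'] [T2Space N]
    [SigmaCompactSpace N] (hφ : Continuous φ) (h𝒢 : IsGeneratingSet I' F 𝒢)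
    (hS : ∀ Z ∈ S, (∃ Y ∈ 𝒢, IsPhiRelated I I' φ Z Y) ∨ IsPhiRelated I I' φ Z (fun _ => 0))
    {X : VectorFieldOn I M} (hX : X ∈ AddSubmonoid.closure (ccSmul I S)) :
    mfderivVF I I' φ X ∈ AddSubmonoid.closure (ccSmulComp I φ F) := by
  induction hX using AddSubmonoid.closure_induction with
  | zero => rw [map_zero]; exact zero_mem _
  | add _ _ _ _ hX hY => rw [map_add]; exact add_mem hX hY
  | mem _ hV =>
    obtain ⟨g, hg, Z, hZ, rfl⟩ := hV
    rcases hS Z hZ with ⟨Y, hY, hZY⟩ | hZ0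
    · -- `Y` itself need not lie in `F`, but `h • Y` does and agrees with `Y` over `φ (supp g)`
      obtain ⟨h, hh, hh1⟩ := exists_isCcFn_eqOn_one I' (hg.2.image hφ)
      refine AddSubmonoid.subset_closure
        ⟨g, hg, _, h𝒢.smul_mem h hh Y hY, funext fun u => ?_⟩
      simp only [mfderivVF_apply, id_eq, map_smul]
      rw [hZY u]
      by_cases hu : g u = 0
      · rw [hu, zero_smul, zero_smul]
      · rw [hh1 ⟨u, subset_tsupport g hu, rfl⟩, Pi.one_apply, one_smul]
    · convert zero_mem (AddSubmonoid.closure (ccSmulComp I φ F))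
      funext u
      simp only [mfderivVF_apply, id_eq, map_smul]
      rw [hZ0 u, smul_zero, Pi.zero_apply]

theorem closure_ccSmulComp_le_map (hφ : ContMDiff I I' (⊤ : ℕ∞) φ)
    (h𝒢 : IsGeneratingSet I' F 𝒢) (hS : ∀ W ∈ 𝒢, ∃ Z ∈ S, IsPhiRelated I I' φ Z W) :
    AddSubmonoid.closure (ccSmulComp I φ F) ≤
      (AddSubmonoid.closure (ccSmul I S)).map (mfderivVF I I' φ) := by
  rw [AddSubmonoid.closure_le]
  rintro _ ⟨f, hf, Y, hY, rfl⟩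
  have hY𝒢 := (isCcSpan_iff_mem_closure I').1 (h𝒢.spans Y hY)
  clear hY
  induction hY𝒢 using AddSubmonoid.closure_induction with
  | zero =>
    refine ⟨0, zero_mem _, funext fun u => ?_⟩
    rw [map_zero, Pi.zero_apply, Pi.zero_apply, smul_zero]
  | add Y₁ Y₂ _ _ hY₁ hY₂ =>
    obtain ⟨X₁, hX₁, hdX₁⟩ := hY₁
    obtain ⟨X₂, hX₂, hdX₂⟩ := hY₂
    refine ⟨X₁ + X₂, add_mem hX₁ hX₂, funext fun u => ?_⟩
    rw [map_add, Pi.add_apply, hdX₁, hdX₂, Pi.add_apply, smul_add]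
  | mem _ hV =>
    obtain ⟨g, hg, W, hW, rfl⟩ := hV
    obtain ⟨Z, hZ, hZW⟩ := hS W hW
    refine ⟨fun u => (f u * g (φ u)) • Z u, AddSubmonoid.subset_closure
      ⟨_, ⟨hf.1.mul (hg.1.comp hφ), hf.2.mul_right⟩, Z, hZ, rfl⟩, funext fun u => ?_⟩
    rw [mfderivVF_apply, map_smul, hZW u, mul_smul]
    rfl

end PullbackSpan

theorem statement_2_general
    {n m : ℕ} {U V : Type*}
    [TopologicalSpace U] [ChartedSpace (EuclideanSpace ℝ (Fin n)) U]
    [IsManifold (𝓡 n) (⊤ : ℕ∞) U] [T2Space U] [SigmaCompactSpace U]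
    [TopologicalSpace V] [ChartedSpace (EuclideanSpace ℝ (Fin m)) V]
    [IsManifold (𝓡 m) (⊤ : ℕ∞) V] [T2Space V] [SigmaCompactSpace V]
    (φ : U → V) (hφ : ContMDiff (𝓡 n) (𝓡 m) (⊤ : ℕ∞) φ)
    (F 𝒢 : Set (VectorFieldOn (𝓡 m) V))
    (h𝒢 : IsGeneratingSet (𝓡 m) F 𝒢)
    (hlift : ∀ Y ∈ F, ∃ Z : VectorFieldOn (𝓡 n) U,
      IsSmoothVF (𝓡 n) Z ∧ IsPhiRelated (𝓡 n) (𝓡 m) φ Z Y) :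
    PullbackModule (𝓡 n) (𝓡 m) φ F =
      {X | IsCcSpan (𝓡 n)
        {Z | IsSmoothVF (𝓡 n) Z ∧
          ((∃ Y ∈ 𝒢, IsPhiRelated (𝓡 n) (𝓡 m) φ Z Y) ∨
            IsPhiRelated (𝓡 n) (𝓡 m) φ Z (fun _ => 0))} X} := by
  set S := {Z | IsSmoothVF (𝓡 n) Z ∧
    ((∃ Y ∈ 𝒢, IsPhiRelated (𝓡 n) (𝓡 m) φ Z Y) ∨ IsPhiRelated (𝓡 n) (𝓡 m) φ Z (fun _ => 0))}
  have hS : ∀ Z ∈ S, IsSmoothVF (𝓡 n) Z := fun Z hZ => hZ.1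
  have hlift𝒢 : ∀ W ∈ 𝒢, ∃ Z ∈ S, IsPhiRelated (𝓡 n) (𝓡 m) φ Z W := fun W hW => by
    obtain ⟨Z, hZ, hZW⟩ := exists_isPhiRelated_of_forall_isCcFn_smul hφ
      fun g hg => hlift _ (h𝒢.smul_mem g hg W hW)
    exact ⟨Z, ⟨hZ, Or.inl ⟨W, hW, hZW⟩⟩, hZW⟩
  ext X
  rw [mem_pullbackModule_iff, Set.mem_ofPred_eq, isCcSpan_iff_mem_closure]
  constructor
  · rintro ⟨hX, hdX⟩
    obtain ⟨L, hL, hdL⟩ := AddSubmonoid.mem_map.1 (closure_ccSmulComp_le_map hφ h𝒢 hlift𝒢 hdX)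
    have hXL := sub_mem_XC hX (mem_XC_of_mem_closure hS hL)
    have hdXL : mfderivVF (𝓡 n) (𝓡 m) φ (X - L) = 0 := by rw [map_sub, hdL, sub_self]
    have hXLS : X - L ∈ S := ⟨hXL.1, Or.inr (congrFun hdXL)⟩
    obtain ⟨χ, hχ, hχXL⟩ := exists_isCcFn_smul_eq hXL.2
    rw [← add_sub_cancel L X, ← hχXL]
    exact add_mem hL (AddSubmonoid.subset_closure ⟨χ, hχ, _, hXLS, rfl⟩)
  · intro hX
    exact ⟨mem_XC_of_mem_closure hS hX,
      mfderivVF_mem_closure_of_mem_closure hφ.continuous h𝒢 (fun Z hZ => hZ.2) hX⟩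

/-- if every element of `F` admits a `φ`-lift, then the pullback module
`φ⁻¹(F)` is the `C_c^∞(U)`-span of the smooth vector fields on `U` which are
`φ`-related to an element of the generating set `𝒢` or to the zero vector field. -/
theorem statement_2
    {n m : ℕ} {U V : Type*}
    [TopologicalSpace U] [ChartedSpace (EuclideanSpace ℝ (Fin n)) U]
    [IsManifold (𝓡 n) (⊤ : ℕ∞) U] [T2Space U] [SigmaCompactSpace U]
    [TopologicalSpace V] [ChartedSpace (EuclideanSpace ℝ (Fin m)) V]
    [IsManifold (𝓡 m) (⊤ : ℕ∞) V] [T2Space V] [SigmaCompactSpace V]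
    (φ : U → V) (hφ : ContMDiff (𝓡 n) (𝓡 m) (⊤ : ℕ∞) φ)
    (F 𝒢 : Set (VectorFieldOn (𝓡 m) V))
    (hF : IsCinftySubmodule (𝓡 m) F) (h𝒢 : IsGeneratingSet (𝓡 m) F 𝒢)
    (hlift : ∀ Y ∈ F, ∃ Z : VectorFieldOn (𝓡 n) U,
      IsSmoothVF (𝓡 n) Z ∧ IsPhiRelated (𝓡 n) (𝓡 m) φ Z Y) :
    PullbackModule (𝓡 n) (𝓡 m) φ F =
      {X | IsCcSpan (𝓡 n)
        {Z | IsSmoothVF (𝓡 n) Z ∧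
          ((∃ Y ∈ 𝒢, IsPhiRelated (𝓡 n) (𝓡 m) φ Z Y) ∨
            IsPhiRelated (𝓡 n) (𝓡 m) φ Z (fun _ => 0))} X} :=
  statement_2_general φ hφ F 𝒢 h𝒢 hlift

end
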